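/- Let G be a D-regular graph and x~y adjacent vertices. Then there exists an optimal transport plan from μ_x to μ_y induced by a bijection T : B_1(x) → B_1(y) such that T(v) = v for all v ∈ B_1(x) ∩ B_1(y), and the cost of this plan, namely (1/(D+1))·Σ_{v∈B_1(x)} d(v, T(v)), equals W_1(μ_x, μ_y). -/

import Mathlib

open Finset

namespace BMS

open scoped Classical

variable {V : Type*}

/-- The uniform probability measure on the closed 1-ball of `x` in a `D`-regular graph. -/
noncomputable def mu (G : SimpleGraph V) (D : ℕ) (x : V) : V → ℝ :=
  fun v => if G.dist x v ≤ 1 then 1 / (D + 1) else 0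

/-- The L¹-Wasserstein distance between `μ_x` and `μ_y`, as an infimum over transport plans. -/
noncomputable def W1 (G : SimpleGraph V) [Fintype V] (D : ℕ) (x y : V) : ℝ :=
  sInf { c : ℝ | ∃ π : V → V → ℝ,
    (∀ u v, 0 ≤ π u v) ∧
    (∀ u, ∑ v, π u v = mu G D x u) ∧
    (∀ v, ∑ u, π u v = mu G D y v) ∧
    c = ∑ u, ∑ v, (G.dist u v : ℝ) * π u v }

/-- Ollivier Ricci curvature (Lin–Lu–Yau normalization for regular graphs). -/
noncomputable def kappa (G : SimpleGraph V) [Fintype V] (D : ℕ) (x y : V) : ℝ :=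
  ((D + 1) / D) * (1 - W1 G D x y)

/-- `G` is Bonnet–Myers sharp: the infimum of the curvature over edges equals `2 / L`. -/
def BMSharp (G : SimpleGraph V) [Fintype V] (D L : ℕ) : Prop :=
  sInf { k : ℝ | ∃ x y, G.Adj x y ∧ k = kappa G D x y } = 2 / (L : ℝ)

/-- Number of neighbors of `y` at distance `k` from `x0`. -/
noncomputable def sphDeg (G : SimpleGraph V) [Fintype V] (x0 y : V) (k : ℕ) : ℕ :=
  (Finset.univ.filter (fun v => G.Adj y v ∧ G.dist x0 v = k)).card

/-- Number of triangles containing the edge `x ~ y` (common neighbors of `x` and `y`). -/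
noncomputable def tri (G : SimpleGraph V) [Fintype V] (x y : V) : ℕ :=
  (Finset.univ.filter (fun v => G.Adj x v ∧ G.Adj y v)).card

/-- A good optimal transport map from `B_1(a)` to `B_1(b)`: a bijection between the 1-balls,
fixing exactly the vertices of `B_1(a) ∩ B_1(b)` (among the domain), whose cost realizes
the Wasserstein distance `W1 (μ_a, μ_b)`. -/
def goodMap (G : SimpleGraph V) [Fintype V] (D : ℕ) (a b : V) (T : V → V) : Prop :=
  Set.BijOn T {v | G.dist a v ≤ 1} {v | G.dist b v ≤ 1} ∧
  (∀ v, G.dist a v ≤ 1 → (T v = v ↔ G.dist b v ≤ 1)) ∧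
  (1 / (D + 1 : ℝ)) *
      ∑ v ∈ Finset.univ.filter (fun v => G.dist a v ≤ 1), (G.dist v (T v) : ℝ) =
    W1 G D a b

/-!
Since `μ_x` and `μ_y` are uniform on balls of the same size `D + 1`, a transport plan rescaled by
`D + 1` is a doubly stochastic matrix between the two balls. By Birkhoff's theorem it is a convex
combination of permutation matrices, so the linear cost is minimized by a bijection
`B_1(x) → B_1(y)`, and `W_1` is the cost of an optimal bijection. If an optimal bijection `T`
moves some `v ∈ B_1(x) ∩ B_1(y)`, composing it with the transposition of `v` and `T⁻¹ v` fixes `v`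
and, by the triangle inequality `d(T⁻¹ v, T v) ≤ d(T⁻¹ v, v) + d(v, T v)`, does not increase the
cost.
-/

section Birkhoff

variable {ι : Type*} [Fintype ι] [DecidableEq ι]

theorem sum_sum_mul_permMatrix (K : ι → ι → ℝ) (σ : Equiv.Perm ι) :
    ∑ i, ∑ j, K i j * σ.permMatrix ℝ i j = ∑ i, K i (σ i) := by
  simp [Equiv.Perm.permMatrix, PEquiv.toMatrix_apply, Equiv.toPEquiv_apply]

theorem exists_perm_sum_le_of_mem_doublyStochastic (K : ι → ι → ℝ) {M : Matrix ι ι ℝ}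
    (hM : M ∈ doublyStochastic ℝ ι) :
    ∃ σ : Equiv.Perm ι, ∑ i, K i (σ i) ≤ ∑ i, ∑ j, K i j * M i j := by
  let f : Matrix ι ι ℝ →ₗ[ℝ] ℝ :=
    { toFun := fun M => ∑ i, ∑ j, K i j * M i j
      map_add' := fun M N => by simp [mul_add, Finset.sum_add_distrib]
      map_smul' := fun a M => by simp [Finset.mul_sum, mul_left_comm] }
  rw [← SetLike.mem_coe, doublyStochastic_eq_convexHull_permMatrix] at hM
  obtain ⟨_, ⟨σ, rfl⟩, hσ⟩ :=
    (f.concaveOn convex_univ).exists_le_of_mem_convexHull (Set.subset_univ _) hM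
  exact ⟨σ, (sum_sum_mul_permMatrix K σ).symm.trans_le hσ⟩

end Birkhoff

section Transport

variable [Fintype V] {A B : Finset V} {r : ℝ} {π : V → V → ℝ}

structure IsUniformPlan (A B : Finset V) (r : ℝ) (π : V → V → ℝ) : Prop where
  nonneg : ∀ u v, 0 ≤ π u v
  sum_row : ∀ u, ∑ v, π u v = if u ∈ A then r else 0
  sum_col : ∀ v, ∑ u, π u v = if v ∈ B then r else 0

namespace IsUniformPlan

variable (hπ : IsUniformPlan A B r π)
include hπ

theorem eq_zero_of_notMem_left {u : V} (hu : u ∉ A) (v : V) : π u v = 0 :=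
  (Finset.sum_eq_zero_iff_of_nonneg fun w _ => hπ.nonneg u w).mp
    (by rw [hπ.sum_row, if_neg hu]) v (Finset.mem_univ v)

theorem eq_zero_of_notMem_right {v : V} (hv : v ∉ B) (u : V) : π u v = 0 :=
  (Finset.sum_eq_zero_iff_of_nonneg fun w _ => hπ.nonneg w v).mp
    (by rw [hπ.sum_col, if_neg hv]) u (Finset.mem_univ u)

theorem sum_sum_eq_sum_sum_mem (c : V → V → ℝ) :
    ∑ u, ∑ v, c u v * π u v = ∑ u ∈ A, ∑ v ∈ B, c u v * π u v := by
  rw [← Finset.sum_subset (Finset.subset_univ A) fun u _ hu =>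
    Finset.sum_eq_zero fun v _ => by rw [hπ.eq_zero_of_notMem_left hu, mul_zero]]
  refine Finset.sum_congr rfl fun u _ => (Finset.sum_subset (Finset.subset_univ B) ?_).symm
  intro v _ hv
  rw [hπ.eq_zero_of_notMem_right hv, mul_zero]

theorem mem_doublyStochastic (hr : 0 < r) {T : Equiv.Perm V} (hT : ∀ v, T v ∈ B ↔ v ∈ A) :
    Matrix.of (fun a b : A => π a (T b) / r) ∈ doublyStochastic ℝ A := by
  have hrow : ∀ u, ∑ b : A, π u (T b) = ∑ v, π u v := fun u => by
    rw [Finset.sum_coe_sort A (fun w => π u (T w)),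
      Finset.sum_equiv T (fun w => (hT w).symm) (fun _ _ => rfl),
      Finset.sum_subset (Finset.subset_univ B) fun v _ hv => hπ.eq_zero_of_notMem_right hv u]
  have hcol : ∀ v, ∑ a : A, π a v = ∑ u, π u v := fun v => by
    rw [Finset.sum_coe_sort A (fun w => π w v),
      Finset.sum_subset (Finset.subset_univ A) fun u _ hu => hπ.eq_zero_of_notMem_left hu v]
  refine mem_doublyStochastic_iff_sum.mpr
    ⟨fun a b => div_nonneg (hπ.nonneg _ _) hr.le, fun a => ?_, fun b => ?_⟩
  · simp only [Matrix.of_apply, ← Finset.sum_div, hrow, hπ.sum_row, if_pos a.2, div_self hr.ne']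
  · simp only [Matrix.of_apply, ← Finset.sum_div, hcol, hπ.sum_col, (hT b).mpr b.2, if_true,
      div_self hr.ne']

theorem exists_perm_mul_sum_le (hr : 0 < r) {T₀ : Equiv.Perm V} (hT₀ : ∀ v, T₀ v ∈ B ↔ v ∈ A)
    (c : V → V → ℝ) :
    ∃ T : Equiv.Perm V, (∀ v, T v ∈ B ↔ v ∈ A) ∧
      r * ∑ u ∈ A, c u (T u) ≤ ∑ u, ∑ v, c u v * π u v := by
  obtain ⟨σ, hσ⟩ := exists_perm_sum_le_of_mem_doublyStochastic (fun a b : A => c a (T₀ b))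
    (hπ.mem_doublyStochastic hr hT₀)
  refine ⟨T₀ * Equiv.Perm.ofSubtype σ, fun v => ?_, ?_⟩
  · rw [Equiv.Perm.mul_apply, hT₀]
    exact Equiv.Perm.ofSubtype_apply_mem_iff_mem σ v
  have hcost : ∑ u, ∑ v, c u v * π u v =
      r * ∑ a : A, ∑ b : A, c a (T₀ b) * Matrix.of (fun a b : A => π a (T₀ b) / r) a b := by
    rw [hπ.sum_sum_eq_sum_sum_mem, ← Finset.sum_coe_sort A, Finset.mul_sum]
    refine Finset.sum_congr rfl fun a _ => ?_
    rw [Finset.mul_sum, ← Finset.sum_equiv T₀ (fun w => (hT₀ w).symm) (fun _ _ => rfl),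
      ← Finset.sum_coe_sort A]
    refine Finset.sum_congr rfl fun b _ => ?_
    rw [Matrix.of_apply]
    field_simp
  have hmatch : ∑ u ∈ A, c u ((T₀ * Equiv.Perm.ofSubtype σ) u) = ∑ a : A, c a (T₀ (σ a)) := by
    rw [← Finset.sum_coe_sort A (fun u => c u ((T₀ * Equiv.Perm.ofSubtype σ) u))]
    refine Finset.sum_congr rfl fun a _ => ?_
    rw [Equiv.Perm.mul_apply, Equiv.Perm.ofSubtype_apply_coe]
  rw [hcost, hmatch]
  exact mul_le_mul_of_nonneg_left hσ hr.le

end IsUniformPlan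

noncomputable def matchingPlan (A : Finset V) (r : ℝ) (T : V → V) (u v : V) : ℝ :=
  if u ∈ A ∧ T u = v then r else 0

theorem isUniformPlan_matchingPlan (hr : 0 ≤ r) {T : Equiv.Perm V}
    (hT : ∀ v, T v ∈ B ↔ v ∈ A) : IsUniformPlan A B r (matchingPlan A r T) where
  nonneg u v := by unfold matchingPlan; split_ifs <;> simp [hr]
  sum_row u := by by_cases hu : u ∈ A <;> simp [matchingPlan, hu]
  sum_col v := by
    have hmem : T.symm v ∈ A ↔ v ∈ B := by rw [← hT, Equiv.apply_symm_apply]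
    rw [Finset.sum_eq_single (T.symm v)]
    · simp [matchingPlan, hmem]
    · exact fun u _ hu => if_neg fun h => hu (T.eq_symm_apply.mpr h.2)
    · simp

theorem sum_sum_mul_matchingPlan (c : V → V → ℝ) (T : V → V) :
    ∑ u, ∑ v, c u v * matchingPlan A r T u v = r * ∑ u ∈ A, c u (T u) := by
  rw [Finset.mul_sum, ← Finset.sum_subset (Finset.subset_univ A)]
  · refine Finset.sum_congr rfl fun u hu => ?_
    rw [Finset.sum_eq_single (T u)]
    · simp [matchingPlan, hu, mul_comm]
    · exact fun v _ hv => by simp [matchingPlan, Ne.symm hv]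
    · simp
  · intro u _ hu
    simp [matchingPlan, hu]

end Transport

theorem exists_perm_forall_mem_iff [Fintype V] {A B : Finset V} (h : #A = #B) :
    ∃ T : Equiv.Perm V, ∀ v, T v ∈ B ↔ v ∈ A := by
  refine ⟨(Finset.equivOfCardEq h).extendSubtype, fun v => ⟨fun hv => ?_, fun hv => ?_⟩⟩
  · by_contra hvA
    exact Equiv.extendSubtype_not_mem _ v hvA hv
  · exact Equiv.extendSubtype_mem _ v hv

section Exchange

variable {A B : Finset V} {c : V → V → ℝ} {T : Equiv.Perm V} {u v : V}

theorem mul_swap_mem_iff (hu : u ∈ A) (hv : v ∈ A) (hT : ∀ w, T w ∈ B ↔ w ∈ A) (w : V) :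
    (T * Equiv.swap u v) w ∈ B ↔ w ∈ A := by
  rw [Equiv.Perm.mul_apply, hT, Equiv.swap_apply_def]
  split_ifs <;> simp_all

theorem sum_mul_swap_le (hc₀ : ∀ w, c w w = 0) (hc : ∀ u v w, c u w ≤ c u v + c v w)
    (hu : u ∈ A) (hv : v ∈ A) (hTu : T u = v) :
    ∑ w ∈ A, c w ((T * Equiv.swap u v) w) ≤ ∑ w ∈ A, c w (T w) := by
  rcases eq_or_ne u v with rfl | huv
  · simp
  have hpair : {u, v} ⊆ A := Finset.insert_subset hu (Finset.singleton_subset_iff.mpr hv)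
  have hrest : ∑ w ∈ A \ {u, v}, c w ((T * Equiv.swap u v) w) = ∑ w ∈ A \ {u, v}, c w (T w) := by
    refine Finset.sum_congr rfl fun w hw => ?_
    simp only [Finset.mem_sdiff, Finset.mem_insert, Finset.mem_singleton, not_or] at hw
    rw [Equiv.Perm.mul_apply, Equiv.swap_apply_of_ne_of_ne hw.2.1 hw.2.2]
  rw [← Finset.sum_sdiff hpair, ← Finset.sum_sdiff hpair (f := fun w => c w (T w)), hrest,
    Finset.sum_pair huv, Finset.sum_pair huv]
  simp only [Equiv.Perm.mul_apply, Equiv.swap_apply_left, Equiv.swap_apply_right, hTu, hc₀]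
  linarith [hc u v (T v)]

theorem filter_apply_eq_self_ssubset_mul_swap (hv : v ∈ A) (hTu : T u = v) (hTv : T v ≠ v) :
    A.filter (fun w => T w = w) ⊂ A.filter (fun w => (T * Equiv.swap u v) w = w) := by
  have hsub : A.filter (fun w => T w = w) ⊆ A.filter (fun w => (T * Equiv.swap u v) w = w) := by
    intro w hw
    rw [Finset.mem_filter] at hw ⊢
    have hwu : w ≠ u := by rintro rfl; exact hTv (by rw [← hTu, hw.2, hw.2])
    have hwv : w ≠ v := by rintro rfl; exact hTv hw.2
    rw [Equiv.Perm.mul_apply, Equiv.swap_apply_of_ne_of_ne hwu hwv]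
    exact hw
  refine (Finset.ssubset_iff_of_subset hsub).mpr ⟨v, ?_, by simp [hTv]⟩
  exact Finset.mem_filter.mpr ⟨hv, by rw [Equiv.Perm.mul_apply, Equiv.swap_apply_right, hTu]⟩

/-- Among the cost-minimizing bijections, one with the most fixed points fixes all of `A ∩ B`:
otherwise a swap produces a minimizer with more. -/
theorem exists_min_perm_fixing_inter [Fintype V] (hc₀ : ∀ w, c w w = 0)
    (hc : ∀ u v w, c u w ≤ c u v + c v w) (hAB : ∃ T₀ : Equiv.Perm V, ∀ w, T₀ w ∈ B ↔ w ∈ A) :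
    ∃ T : Equiv.Perm V, (∀ w, T w ∈ B ↔ w ∈ A) ∧
      (∀ T' : Equiv.Perm V, (∀ w, T' w ∈ B ↔ w ∈ A) →
        ∑ w ∈ A, c w (T w) ≤ ∑ w ∈ A, c w (T' w)) ∧
      ∀ v ∈ A, v ∈ B → T v = v := by
  set S := Finset.univ.filter fun T : Equiv.Perm V => ∀ w, T w ∈ B ↔ w ∈ A
  let cost : Equiv.Perm V → ℝ := fun T => ∑ w ∈ A, c w (T w)
  obtain ⟨T₀, hT₀⟩ := hAB
  obtain ⟨T₁, hT₁S, hT₁min⟩ := S.exists_min_image cost ⟨T₀, by simp [S, hT₀]⟩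
  obtain ⟨T, hT, hTmax⟩ := (S.filter (cost · = cost T₁)).exists_max_image
    (fun T => #(A.filter fun w => T w = w)) ⟨T₁, Finset.mem_filter.mpr ⟨hT₁S, rfl⟩⟩
  obtain ⟨hTS, hTcost⟩ := Finset.mem_filter.mp hT
  have hTAB : ∀ w, T w ∈ B ↔ w ∈ A := (Finset.mem_filter.mp hTS).2
  refine ⟨T, hTAB, fun T' hT' => ?_, fun v hvA hvB => ?_⟩
  · change cost T ≤ cost T'
    exact hTcost ▸ hT₁min T' (by simp [S, hT'])
  · by_contra hTv
    have hTu : T (T.symm v) = v := T.apply_symm_apply v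
    have hu : T.symm v ∈ A := (hTAB _).mp (by rwa [hTu])
    have hswapS : T * Equiv.swap (T.symm v) v ∈ S := by
      simpa [S] using mul_swap_mem_iff hu hvA hTAB
    have hswap_cost : cost (T * Equiv.swap (T.symm v) v) = cost T₁ :=
      le_antisymm (hTcost ▸ sum_mul_swap_le hc₀ hc hu hvA hTu) (hT₁min _ hswapS)
    exact (Finset.card_lt_card (filter_apply_eq_self_ssubset_mul_swap hvA hTu hTv)).not_ge
      (hTmax _ (Finset.mem_filter.mpr ⟨hswapS, hswap_cost⟩))

end Exchange

section Graph

variable {G : SimpleGraph V}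

theorem dist_le_one_iff (hconn : G.Connected) {x v : V} :
    G.dist x v ≤ 1 ↔ v = x ∨ G.Adj x v := by
  rw [Nat.le_one_iff_eq_zero_or_eq_one, hconn.dist_eq_zero_iff, SimpleGraph.dist_eq_one_iff_adj,
    eq_comm]

theorem card_filter_dist_le_one [Fintype V] (hconn : G.Connected) {D : ℕ}
    (hreg : G.IsRegularOfDegree D) (x : V) :
    #(Finset.univ.filter fun v => G.dist x v ≤ 1) = D + 1 := by
  have hball : (Finset.univ.filter fun v => G.dist x v ≤ 1) = insert x (G.neighborFinset x) := by
    ext v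
    simp [dist_le_one_iff hconn]
  rw [hball, Finset.card_insert_of_notMem (by simp), SimpleGraph.card_neighborFinset_eq_degree,
    hreg x]

theorem mu_eq_ite [Fintype V] (D : ℕ) (x v : V) :
    mu G D x v =
      if v ∈ Finset.univ.filter (fun v => G.dist x v ≤ 1) then 1 / ((D : ℝ) + 1) else 0 := by
  simp [mu]

end Graph

theorem stmt_general [Fintype V] (G : SimpleGraph V) (hconn : G.Connected)
    (D : ℕ) (hreg : G.IsRegularOfDegree D)
    (x y : V) :
    ∃ T : V → V,
      Set.BijOn T {v | G.dist x v ≤ 1} {v | G.dist y v ≤ 1} ∧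
      (∀ v, G.dist x v ≤ 1 → G.dist y v ≤ 1 → T v = v) ∧
      (1 / (D + 1 : ℝ)) *
          ∑ v ∈ Finset.univ.filter (fun v => G.dist x v ≤ 1), (G.dist v (T v) : ℝ)
        = W1 G D x y := by
  set A := Finset.univ.filter fun v => G.dist x v ≤ 1
  set B := Finset.univ.filter fun v => G.dist y v ≤ 1
  have hr : (0 : ℝ) < 1 / (D + 1) := by positivity
  obtain ⟨T, hTAB, hTmin, hTfix⟩ :=
    exists_min_perm_fixing_inter (A := A) (B := B) (c := fun u v => (G.dist u v : ℝ))
      (by simp) (fun u v w => by exact_mod_cast hconn.dist_triangle)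
      (exists_perm_forall_mem_iff (by rw [card_filter_dist_le_one hconn hreg,
        card_filter_dist_le_one hconn hreg]))
  refine ⟨T, T.bijOn fun v => by simpa [A, B] using hTAB v,
    fun v hx hy => hTfix v (by simpa [A]) (by simpa [B]), ?_⟩
  unfold W1
  simp only [mu_eq_ite]
  refine (IsLeast.csInf_eq ⟨?_, ?_⟩).symm
  · have hplan := isUniformPlan_matchingPlan hr.le hTAB
    exact ⟨matchingPlan A _ T, hplan.nonneg, hplan.sum_row, hplan.sum_col,
      (sum_sum_mul_matchingPlan (fun u v => (G.dist u v : ℝ)) T).symm⟩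
  · rintro _ ⟨π, hnonneg, hrow, hcol, rfl⟩
    obtain ⟨T', hT', hle⟩ :=
      IsUniformPlan.exists_perm_mul_sum_le ⟨hnonneg, hrow, hcol⟩ hr hTAB
        fun u v => (G.dist u v : ℝ)
    exact (mul_le_mul_of_nonneg_left (hTmin T' hT') hr.le).trans hle

theorem stmt [Fintype V] (G : SimpleGraph V) (hconn : G.Connected)
    (D : ℕ) (hD : 0 < D) (hreg : G.IsRegularOfDegree D)
    (x y : V) (hxy : G.Adj x y) :
    ∃ T : V → V,
      Set.BijOn T {v | G.dist x v ≤ 1} {v | G.dist y v ≤ 1} ∧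
      (∀ v, G.dist x v ≤ 1 → G.dist y v ≤ 1 → T v = v) ∧
      (1 / (D + 1 : ℝ)) *
          ∑ v ∈ Finset.univ.filter (fun v => G.dist x v ≤ 1), (G.dist v (T v) : ℝ)
        = W1 G D x y :=
  stmt_general G hconn D hreg x y

end BMS
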